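/- Let G = (A ∪ B, E) be an instance of the popular matching problem and G' = (A' ∪ B', E') the augmented instance where B' = B ∪ {l(a) : a ∈ A} with l(a) the unique worst-choice object of a, and A' = A ∪ {d₁,...,d_{|B|}} with each dummy agent adjacent to and indifferent among all objects in B'. Then every matching M of G extends to a perfect matching M' of G', every perfect matching of G' projects to a matching of G, and Δ(M,N) = Δ(M',N') for all matchings M, N of G; hence G admits a popular matching if and only if G' admits a popular assignment. -/

import Mathlib

open Finset

/-- A perfect matching (assignment) in the bipartite graph with edge relation `E`:
a bijection `M : A → B` using only edges of `E`. -/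
def IsPM {A B : Type*} (E : A → B → Prop) (M : A → B) : Prop :=
  Function.Bijective M ∧ ∀ a, E a (M a)

/-- `Δ(N, M)`: number of agents preferring `N` minus number preferring `M`. -/
noncomputable def Delta {A B : Type*} [Fintype A] (pref : A → B → B → Prop)
    (N M : A → B) : ℤ :=
  letI := Classical.propDecidable
  ((univ.filter fun a => pref a (N a) (M a)).card : ℤ) -
    ((univ.filter fun a => pref a (M a) (N a)).card : ℤ)

/-- `wt_M(a,b)`: `1` if `b ≻_a M(a)`, `-1` if `M(a) ≻_a b`, `0` otherwise. -/
noncomputable def wt {A B : Type*} (pref : A → B → B → Prop) (M : A → B)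
    (a : A) (b : B) : ℤ :=
  letI := Classical.propDecidable
  if pref a b (M a) then 1 else if pref a (M a) b then -1 else 0

/-- A (not necessarily perfect) matching in the bipartite graph with edge
relation `E`, given as a partial assignment `M : A → Option B`. -/
def IsMatching {A B : Type*} (E : A → B → Prop) (M : A → Option B) : Prop :=
  (∀ a b, M a = some b → E a b) ∧ ∀ a a' b, M a = some b → M a' = some b → a = a'

/-- `vote^κ_a(N, M)`: `+1`/`-1` for a preference between matched partners,
`+κ`/`-κ` when `a` is matched in exactly one of `N`, `M`, and `0` otherwise. -/
noncomputable def vote {A B : Type*} (κ : ℤ) (pref : A → B → B → Prop)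
    (N M : A → Option B) (a : A) : ℤ :=
  letI := Classical.propDecidable
  match N a, M a with
  | some bn, some bm => if pref a bn bm then 1 else if pref a bm bn then -1 else 0
  | some _, none => κ
  | none, some _ => -κ
  | none, none => 0

/-- The size of a matching: the number of matched agents. -/
def msize {A B : Type*} [Fintype A] (M : A → Option B) : ℕ :=
  (univ.filter fun a => (M a).isSome = true).card

/-- Edges of the augmented instance `G'`: original agents keep their edges and
gain an edge to their own last resort object `l(a)` (encoded as `Sum.inr a`);
dummy agents are adjacent to all objects. -/
def Eaug {A B : Type*} [Fintype B] (E : A → B → Prop) :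
    A ⊕ Fin (Fintype.card B) → B ⊕ A → Prop
  | Sum.inl a, Sum.inl b => E a b
  | Sum.inl a, Sum.inr a₂ => a₂ = a
  | Sum.inr _, _ => True

/-- Preferences in the augmented instance `G'`: an original agent `a` keeps her
preferences among original objects and prefers every neighboring original
object to her last resort object `l(a)`; dummy agents are indifferent among
all objects. -/
def prefAug {A B : Type*} [Fintype B] (E : A → B → Prop)
    (pref : A → B → B → Prop) :
    A ⊕ Fin (Fintype.card B) → B ⊕ A → B ⊕ A → Prop
  | Sum.inl a, Sum.inl b, Sum.inl b' => pref a b b'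
  | Sum.inl a, Sum.inl b, Sum.inr a₂ => E a b ∧ a₂ = a
  | _, _, _ => False

/-- `M'` extends the matching `M` of `G`: every agent matched in `M` keeps her
object, and every agent unmatched in `M` receives her last resort object. -/
def Extends {A B : Type*} [Fintype B] (M : A → Option B)
    (M' : A ⊕ Fin (Fintype.card B) → B ⊕ A) : Prop :=
  ∀ a : A, (∀ b, M a = some b → M' (Sum.inl a) = Sum.inl b) ∧
    (M a = none → M' (Sum.inl a) = Sum.inr a)

/-- The projection of a perfect matching of `G'` to a matching of `G`. -/
def projAug {A B : Type*} [Fintype B]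
    (M' : A ⊕ Fin (Fintype.card B) → B ⊕ A) (a : A) : Option B :=
  match M' (Sum.inl a) with
  | Sum.inl b => some b
  | Sum.inr _ => none

lemma Delta_eq_sum_wt' {A B : Type*} [Fintype A] (pref : A → B → B → Prop)
    (hasym : ∀ a b b', pref a b b' → ¬ pref a b' b) (N M : A → B) :
    Delta pref N M = ∑ a, wt pref M a (N a) := by
  classical
  unfold Delta wt
  rw [Finset.card_filter, Finset.card_filter]
  push_cast
  rw [← Finset.sum_sub_distrib]
  refine Finset.sum_congr rfl fun a _ => ?_
  by_cases h1 : pref a (N a) (M a)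
  · simp [h1, hasym _ _ _ h1]
  · by_cases h2 : pref a (M a) (N a) <;> simp [h1, h2]

/-- For the augmented instance `G'` with last resort objects and
dummy agents: every matching `M` of `G` extends to a perfect matching of `G'`,
every perfect matching of `G'` projects to a matching of `G`,
`Δ(M,N) = Δ(M',N')` for all matchings `M, N` of `G` and extensions `M', N'`,
and `G` admits a popular matching iff `G'` admits a popular assignment. -/
theorem stmt18 {A B : Type*} [Fintype A] [Fintype B]
    (E : A → B → Prop) (pref : A → B → B → Prop)
    (hirr : ∀ a b, ¬ pref a b b)
    (htrans : ∀ a b₁ b₂ b₃, pref a b₁ b₂ → pref a b₂ b₃ → pref a b₁ b₃)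
    (hprefE : ∀ a b b', pref a b b' → E a b ∧ E a b') :
    (∀ M, IsMatching E M → ∃ M', IsPM (Eaug E) M' ∧ Extends M M') ∧
    (∀ M', IsPM (Eaug E) M' → IsMatching E (projAug M')) ∧
    (∀ M N M' N', IsMatching E M → IsMatching E N →
      IsPM (Eaug E) M' → IsPM (Eaug E) N' → Extends M M' → Extends N N' →
      Delta (prefAug E pref) M' N' = ∑ a, vote 1 pref M N a) ∧
    ((∃ M, IsMatching E M ∧ ∀ N, IsMatching E N →
        ∑ a, vote 1 pref N M a ≤ 0) ↔
     (∃ M', IsPM (Eaug E) M' ∧ ∀ N', IsPM (Eaug E) N' →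
        Delta (prefAug E pref) N' M' ≤ 0)) := by
  classical
  have hasym : ∀ a b b', pref a b b' → ¬ pref a b' b :=
    fun a b b' h h' => hirr a b (htrans a b b' b h h')
  -- projection is a matching
  have hproj : ∀ M', IsPM (Eaug E) M' → IsMatching E (projAug M') := by
    rintro M' ⟨hbij, hE⟩
    constructor
    · intro a b hb
      unfold projAug at hb
      cases h : M' (Sum.inl a) with
      | inl b' =>
        rw [h] at hb
        have hEa := hE (Sum.inl a)
        rw [h] at hEa
        simp only [Option.some.injEq] at hb
        subst hb
        exact hEa
      | inr a₂ => rw [h] at hb; simp at hb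
    · intro a a' b hb hb'
      unfold projAug at hb hb'
      cases h : M' (Sum.inl a) with
      | inr a₂ => rw [h] at hb; simp at hb
      | inl b1 =>
        cases h' : M' (Sum.inl a') with
        | inr a₃ => rw [h'] at hb'; simp at hb'
        | inl b2 =>
          rw [h] at hb; rw [h'] at hb'
          simp only [Option.some.injEq] at hb hb'
          subst hb; subst hb'
          have heq : M' (Sum.inl a) = M' (Sum.inl a') := by rw [h, h']
          exact Sum.inl.inj (hbij.1 heq)
  -- perfect matchings extend their projection
  have hextproj : ∀ M', IsPM (Eaug E) M' → Extends (projAug M') M' := by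
    rintro M' ⟨hbij, hE⟩ a
    constructor
    · intro b hb
      unfold projAug at hb
      cases h : M' (Sum.inl a) with
      | inl b' =>
        rw [h] at hb
        simp only [Option.some.injEq] at hb
        rw [hb]
      | inr a₂ => rw [h] at hb; simp at hb
    · intro hb
      unfold projAug at hb
      cases h : M' (Sum.inl a) with
      | inl b' => rw [h] at hb; simp at hb
      | inr a₂ =>
        have hEa := hE (Sum.inl a)
        rw [h] at hEa
        have ha : a₂ = a := hEa
        rw [ha]
  -- extension of a matching to a perfect matching
  have hext : ∀ M, IsMatching E M → ∃ M', IsPM (Eaug E) M' ∧ Extends M M' := by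
    rintro M ⟨hME, hMinj⟩
    set f : A → B ⊕ A := fun a => (M a).elim (Sum.inr a) Sum.inl with hf
    have hfinj : Function.Injective f := by
      intro a a' h
      cases hMa : M a with
      | none =>
        cases hMa' : M a' with
        | none => simpa [hf, hMa, hMa'] using h
        | some b' => simp [hf, hMa, hMa'] at h
      | some b =>
        cases hMa' : M a' with
        | none => simp [hf, hMa, hMa'] at h
        | some b' =>
          simp only [hf, hMa, hMa', Option.elim, Sum.inl.injEq] at h
          subst h
          exact hMinj a a' b hMa hMa'
    set S : Finset (B ⊕ A) := (Finset.univ.image f)ᶜ with hS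
    have hcard : Fintype.card ↥S = Fintype.card B := by
      rw [Fintype.card_coe, hS, Finset.card_compl,
        Finset.card_image_of_injective _ hfinj, Finset.card_univ,
        Fintype.card_sum]
      omega
    let e : Fin (Fintype.card B) ≃ ↥S := (Fintype.equivFinOfCardEq hcard).symm
    refine ⟨fun x => match x with
      | Sum.inl a => f a
      | Sum.inr i => (e i : B ⊕ A), ⟨?_, ?_⟩, ?_⟩
    · rw [Fintype.bijective_iff_injective_and_card]
      constructor
      · rintro (a | i) (a' | i') h
        · exact congrArg Sum.inl (hfinj h)
        · exfalso
          have h2 : f a = (e i' : B ⊕ A) := h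
          have h3 := Finset.mem_compl.mp
            (show (e i' : B ⊕ A) ∈ (Finset.univ.image f)ᶜ from (e i').2)
          exact h3 (h2 ▸ Finset.mem_image_of_mem f (Finset.mem_univ a))
        · exfalso
          have h2 : f a' = (e i : B ⊕ A) := h.symm
          have h3 := Finset.mem_compl.mp
            (show (e i : B ⊕ A) ∈ (Finset.univ.image f)ᶜ from (e i).2)
          exact h3 (h2 ▸ Finset.mem_image_of_mem f (Finset.mem_univ a'))
        · exact congrArg Sum.inr (e.injective (Subtype.ext h))
      · simp [Fintype.card_sum, add_comm]
    · rintro (a | i)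
      · show Eaug E (Sum.inl a) (f a)
        cases hMa : M a with
        | some b =>
          have hfa : f a = Sum.inl b := by simp [hf, hMa]
          rw [hfa]
          exact hME a b hMa
        | none =>
          have hfa : f a = Sum.inr a := by simp [hf, hMa]
          rw [hfa]
          show a = a
          rfl
      · show Eaug E (Sum.inr i) _
        trivial
    · intro a
      constructor
      · intro b hb
        show f a = Sum.inl b
        simp [hf, hb]
      · intro hb
        show f a = Sum.inr a
        simp [hf, hb]
  -- Delta of extensions equals sum of votes
  have hdelta : ∀ M N M' N', IsMatching E M → IsMatching E N →
      IsPM (Eaug E) M' → IsPM (Eaug E) N' → Extends M M' → Extends N N' →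
      Delta (prefAug E pref) M' N' = ∑ a, vote 1 pref M N a := by
    intro M N M' N' hM hN hM' hN' hMe hNe
    have hdummy : ∀ (i : Fin (Fintype.card B)) (x y : B ⊕ A),
        ¬ prefAug E pref (Sum.inr i) x y := by
      rintro i (b | a) (b' | a') h <;> exact h
    have hasym' : ∀ (x : A ⊕ Fin (Fintype.card B)) b b',
        prefAug E pref x b b' → ¬ prefAug E pref x b' b := by
      rintro (a | i) (b | a₂) (b' | a₃) h h'
      · exact hasym a b b' h h'
      · exact h'
      · exact h
      · exact h
      all_goals exact hdummy _ _ _ h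
    rw [Delta_eq_sum_wt' _ hasym', Fintype.sum_sum_type]
    have hz : ∀ i : Fin (Fintype.card B),
        wt (prefAug E pref) N' (Sum.inr i) (M' (Sum.inr i)) = 0 := by
      intro i
      unfold wt
      rw [if_neg (hdummy _ _ _), if_neg (hdummy _ _ _)]
    have hterm : ∀ a : A,
        wt (prefAug E pref) N' (Sum.inl a) (M' (Sum.inl a)) = vote 1 pref M N a := by
      intro a
      obtain ⟨hMe1, hMe2⟩ := hMe a
      obtain ⟨hNe1, hNe2⟩ := hNe a
      unfold wt
      cases hMa : M a with
      | some b =>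
        rw [hMe1 b hMa]
        cases hNa : N a with
        | some b' =>
          rw [hNe1 b' hNa]
          simp [vote, prefAug, hMa, hNa]
          by_cases h1 : pref a b b' <;> by_cases h2 : pref a b' b <;> simp [h1, h2]
        | none =>
          rw [hNe2 hNa]
          have hEb : E a b := hM.1 a b hMa
          simp [vote, prefAug, hMa, hNa, hEb]
      | none =>
        rw [hMe2 hMa]
        cases hNa : N a with
        | some b' =>
          rw [hNe1 b' hNa]
          have hEb : E a b' := hN.1 a b' hNa
          simp [vote, prefAug, hMa, hNa, hEb]
        | none =>
          rw [hNe2 hNa]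
          simp [vote, prefAug, hMa, hNa]
    rw [Finset.sum_congr rfl fun i _ => hz i, Finset.sum_const_zero, add_zero]
    exact Finset.sum_congr rfl fun a _ => hterm a
  refine ⟨hext, hproj, hdelta, ?_, ?_⟩
  · rintro ⟨M, hM, hpop⟩
    obtain ⟨M', hM', hMext⟩ := hext M hM
    refine ⟨M', hM', fun N' hN' => ?_⟩
    have hN := hproj N' hN'
    rw [hdelta (projAug N') M N' M' hN hM hN' hM' (hextproj N' hN') hMext]
    exact hpop _ hN
  · rintro ⟨M', hM', hpop⟩
    have hM := hproj M' hM'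
    refine ⟨projAug M', hM, fun N hN => ?_⟩
    obtain ⟨N', hN', hNext⟩ := hext N hN
    rw [← hdelta N (projAug M') N' M' hN hM hN' hM' hNext (hextproj M' hM')]
    exact hpop N' hN'
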